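/- Let U ≤ G = S_h × S_n be a regular subgroup. Then the orbit extension O(U) is regular, the set of U-symmetric SPFs equals the set of O(U)-symmetric SPFs (F^U = F^{O(U)}), and the intersection of the symmetry groups G(F) over all U-symmetric social preference functions F equals O(U). -/

import Mathlib

open Equiv

/-- The action of `S_h × S_n` on preference profiles `p : Fin h → Perm (Fin n)`:
`(p^{(φ,ψ)})_i = ψ ∘ p_{φ⁻¹ i}`. -/
def act {h n : ℕ} (g : Perm (Fin h) × Perm (Fin n)) (p : Fin h → Perm (Fin n)) :
    Fin h → Perm (Fin n) :=
  fun i => g.2 * p (g.1⁻¹ i)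

/-- The symmetry group `G(F)` of a social preference function `F`. -/
def symGroup {h n : ℕ} (F : (Fin h → Perm (Fin n)) → Perm (Fin n)) :
    Subgroup (Perm (Fin h) × Perm (Fin n)) where
  carrier := {g | ∀ p, F (act g p) = g.2 * F p}
  one_mem' := by
    intro p
    have h1 : act (1 : Perm (Fin h) × Perm (Fin n)) p = p := by
      funext i; simp [act]
    rw [h1]; simp
  mul_mem' := by
    intro a b ha hb p
    have hab : act (a * b) p = act a (act b p) := by
      funext i
      simp [act, mul_assoc]
    rw [hab, ha, hb, Prod.snd_mul, mul_assoc]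
  inv_mem' := by
    intro a ha p
    have key := ha (act a⁻¹ p)
    have h1 : act a (act a⁻¹ p) = p := by
      funext i
      simp [act, mul_assoc]
    rw [h1] at key
    rw [key]
    simp [mul_assoc]

/-- A subgroup `U ≤ S_h × S_n` is regular if every stabilized profile forces
the second component to be the identity. -/
def IsRegularSubgroup {h n : ℕ} (U : Subgroup (Perm (Fin h) × Perm (Fin n))) : Prop :=
  ∀ (p : Fin h → Perm (Fin n)) (g : Perm (Fin h) × Perm (Fin n)),
    g ∈ U → act g p = p → g.2 = 1

/-- `F` is `U`-symmetric: `F (p^g) = g.2 * F p` for all `g ∈ U`. -/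
def USymmetric {h n : ℕ} (U : Subgroup (Perm (Fin h) × Perm (Fin n)))
    (F : (Fin h → Perm (Fin n)) → Perm (Fin n)) : Prop :=
  ∀ (p : Fin h → Perm (Fin n)) (g : Perm (Fin h) × Perm (Fin n)),
    g ∈ U → F (act g p) = g.2 * F p

/-- `U ≤_P V`: every `U`-orbit on profiles is contained in the corresponding `V`-orbit. -/
def orbLE {h n : ℕ} (U V : Subgroup (Perm (Fin h) × Perm (Fin n))) : Prop :=
  ∀ (p : Fin h → Perm (Fin n)) (g : Perm (Fin h) × Perm (Fin n)),
    g ∈ U → ∃ g' ∈ V, act g p = act g' p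

/-- The orbit extension `O(U)`: the subgroup generated by all regular
overgroups `V ≥ U` with `V ≤_P U`. -/
def orbitExt {h n : ℕ} (U : Subgroup (Perm (Fin h) × Perm (Fin n))) :
    Subgroup (Perm (Fin h) × Perm (Fin n)) :=
  ⨆ (V : Subgroup (Perm (Fin h) × Perm (Fin n)))
    (_ : IsRegularSubgroup V ∧ U ≤ V ∧ orbLE V U), V

/-!
Since `U` is regular, a `U`-symmetric SPF may take arbitrary values on a set of representatives
of the `U`-orbits of profiles. Hence the common symmetry group `W` of all `U`-symmetric SPFs
contains `U`, is regular (every `G(F)` is), and satisfies `W ≤_P U`: if `g ∈ W` moved `p` out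
of its `U`-orbit, values on the two orbits could be chosen to break the symmetry. So `W ≤ O(U)`.
Conversely, if `V` is regular with `U ≤ V` and `V ≤_P U`, then each `g ∈ V` acts on a profile `p`
like some `u ∈ U`, and regularity of `V` forces `g.2 = u.2`; so every `U`-symmetric SPF is
`V`-symmetric, and `O(U) ≤ W`. All three claims follow from `O(U) = W`.
-/

variable {h n : ℕ}

theorem act_one (p : Fin h → Perm (Fin n)) : act (1 : Perm (Fin h) × Perm (Fin n)) p = p := by
  funext i; simp [act]

theorem act_mul (a b : Perm (Fin h) × Perm (Fin n)) (p : Fin h → Perm (Fin n)) :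
    act (a * b) p = act a (act b p) := by
  funext i; simp [act, mul_assoc]

theorem act_inv_act (g : Perm (Fin h) × Perm (Fin n)) (p : Fin h → Perm (Fin n)) :
    act g⁻¹ (act g p) = p := by
  rw [← act_mul, inv_mul_cancel, act_one]

section Regular

variable {U V : Subgroup (Perm (Fin h) × Perm (Fin n))}

theorem IsRegularSubgroup.mono (hV : IsRegularSubgroup V) (hUV : U ≤ V) :
    IsRegularSubgroup U :=
  fun p g hg => hV p g (hUV hg)

theorem IsRegularSubgroup.snd_eq_of_act_eq (hV : IsRegularSubgroup V)
    {a b : Perm (Fin h) × Perm (Fin n)} (ha : a ∈ V) (hb : b ∈ V) {p : Fin h → Perm (Fin n)}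
    (hab : act a p = act b p) : a.2 = b.2 := by
  have hfix : act (b⁻¹ * a) p = p := by rw [act_mul, hab, act_inv_act]
  have hone : b.2⁻¹ * a.2 = 1 := hV p _ (V.mul_mem (V.inv_mem hb) ha) hfix
  exact (inv_mul_eq_one.mp hone).symm

theorem isRegularSubgroup_symGroup (F : (Fin h → Perm (Fin n)) → Perm (Fin n)) :
    IsRegularSubgroup (symGroup F) := by
  intro p g hg hfix
  have hsym : F (act g p) = g.2 * F p := hg p
  rw [hfix] at hsym
  exact right_eq_mul.mp hsym

theorem usymmetric_iff_le_symGroup {F : (Fin h → Perm (Fin n)) → Perm (Fin n)} :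
    USymmetric U F ↔ U ≤ symGroup F :=
  ⟨fun hF g hg p => hF p g hg, fun hUF p g hg => hUF hg p⟩

theorem le_symGroup_of_orbLE (hV : IsRegularSubgroup V) (hUV : U ≤ V) (hVU : orbLE V U)
    {F : (Fin h → Perm (Fin n)) → Perm (Fin n)} (hF : USymmetric U F) : V ≤ symGroup F := by
  intro g hg p
  obtain ⟨u, hu, hgu⟩ := hVU p g hg
  show F (act g p) = g.2 * F p
  rw [hgu, hF p u hu, hV.snd_eq_of_act_eq hg (hUV hu) hgu]

end Regular

section Orbits

variable (U : Subgroup (Perm (Fin h) × Perm (Fin n)))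

def orbitSetoid : Setoid (Fin h → Perm (Fin n)) where
  r p q := ∃ g ∈ U, act g p = q
  iseqv := by
    refine ⟨fun p => ⟨1, U.one_mem, act_one p⟩, ?_, ?_⟩
    · rintro p q ⟨g, hg, rfl⟩
      exact ⟨g⁻¹, U.inv_mem hg, act_inv_act g p⟩
    · rintro p q r ⟨g, hg, rfl⟩ ⟨g', hg', rfl⟩
      exact ⟨g' * g, U.mul_mem hg' hg, act_mul g' g p⟩

theorem orbitSetoid_mk_act {g : Perm (Fin h) × Perm (Fin n)} (hg : g ∈ U)
    (p : Fin h → Perm (Fin n)) :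
    Quotient.mk (orbitSetoid U) (act g p) = Quotient.mk (orbitSetoid U) p :=
  Quotient.sound ⟨g⁻¹, U.inv_mem hg, act_inv_act g p⟩

theorem exists_act_out_eq (p : Fin h → Perm (Fin n)) :
    ∃ g ∈ U, act g (Quotient.mk (orbitSetoid U) p).out = p :=
  Quotient.exact (Quotient.mk (orbitSetoid U) p).out_eq

noncomputable def repTransporter (p : Fin h → Perm (Fin n)) : Perm (Fin h) × Perm (Fin n) :=
  (exists_act_out_eq U p).choose

theorem repTransporter_mem (p : Fin h → Perm (Fin n)) : repTransporter U p ∈ U :=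
  (exists_act_out_eq U p).choose_spec.1

theorem act_repTransporter (p : Fin h → Perm (Fin n)) :
    act (repTransporter U p) (Quotient.mk (orbitSetoid U) p).out = p :=
  (exists_act_out_eq U p).choose_spec.2

/-- For regular `U`, `(repTransporter U p).2 = 1` when `p` is the chosen representative of its
orbit `c`, so this SPF takes the value `base c` there. -/
noncomputable def extendFromReps (base : Quotient (orbitSetoid U) → Perm (Fin n)) :
    (Fin h → Perm (Fin n)) → Perm (Fin n) :=
  fun p => (repTransporter U p).2 * base (Quotient.mk (orbitSetoid U) p)

variable {U}

theorem usymmetric_extendFromReps (hU : IsRegularSubgroup U)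
    (base : Quotient (orbitSetoid U) → Perm (Fin n)) : USymmetric U (extendFromReps U base) := by
  intro p g hg
  have hclass := orbitSetoid_mk_act U hg p
  have hsnd : (repTransporter U (act g p)).2 = (g * repTransporter U p).2 := by
    refine hU.snd_eq_of_act_eq (repTransporter_mem U _) (U.mul_mem hg (repTransporter_mem U p))
      (p := (Quotient.mk (orbitSetoid U) p).out) ?_
    rw [act_mul, act_repTransporter, ← hclass, act_repTransporter]
  simp only [extendFromReps]
  rw [hclass, hsnd, Prod.snd_mul, mul_assoc]

end Orbits

section CommonSymmetries

variable {U : Subgroup (Perm (Fin h) × Perm (Fin n))}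

variable (U) in
def commonSymmetries : Subgroup (Perm (Fin h) × Perm (Fin n)) :=
  ⨅ (F : (Fin h → Perm (Fin n)) → Perm (Fin n)) (_ : USymmetric U F), symGroup F

theorem mem_commonSymmetries {g : Perm (Fin h) × Perm (Fin n)} :
    g ∈ commonSymmetries U ↔ ∀ F, USymmetric U F → g ∈ symGroup F := by
  simp only [commonSymmetries, Subgroup.mem_iInf]

theorem commonSymmetries_le_symGroup {F : (Fin h → Perm (Fin n)) → Perm (Fin n)}
    (hF : USymmetric U F) : commonSymmetries U ≤ symGroup F :=
  fun _ hg => mem_commonSymmetries.mp hg F hF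

theorem le_commonSymmetries : U ≤ commonSymmetries U :=
  fun _ hg => mem_commonSymmetries.mpr fun _ hF => usymmetric_iff_le_symGroup.mp hF hg

theorem usymmetric_iff_commonSymmetries_le {F : (Fin h → Perm (Fin n)) → Perm (Fin n)} :
    USymmetric U F ↔ commonSymmetries U ≤ symGroup F :=
  ⟨commonSymmetries_le_symGroup,
    fun hF => usymmetric_iff_le_symGroup.mpr (le_commonSymmetries.trans hF)⟩

theorem isRegularSubgroup_commonSymmetries (hU : IsRegularSubgroup U) :
    IsRegularSubgroup (commonSymmetries U) :=
  (isRegularSubgroup_symGroup _).mono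
    (commonSymmetries_le_symGroup (usymmetric_extendFromReps hU fun _ => 1))

theorem orbLE_commonSymmetries [Nontrivial (Fin n)] (hU : IsRegularSubgroup U) :
    orbLE (commonSymmetries U) U := by
  classical
  intro p g hg
  by_contra! hout
  have hclass : Quotient.mk (orbitSetoid U) (act g p) ≠ Quotient.mk (orbitSetoid U) p := by
    intro heq
    obtain ⟨u, hu, hup⟩ := Quotient.exact heq
    have := congrArg (act u⁻¹) hup
    rw [act_inv_act] at this
    exact hout u⁻¹ (U.inv_mem hu) this
  obtain ⟨σ, hσ⟩ :=
    exists_ne ((repTransporter U (act g p)).2⁻¹ * (g.2 * (repTransporter U p).2))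
  let F := extendFromReps U fun c => if c = Quotient.mk (orbitSetoid U) (act g p) then σ else 1
  have hgF : F (act g p) = g.2 * F p :=
    mem_commonSymmetries.mp hg F (usymmetric_extendFromReps hU _) p
  simp only [F, extendFromReps, if_neg hclass.symm, mul_one] at hgF
  exact hσ (eq_inv_mul_of_mul_eq hgF)

theorem orbitExt_eq_commonSymmetries [Nontrivial (Fin n)] (hU : IsRegularSubgroup U) :
    orbitExt U = commonSymmetries U := by
  refine le_antisymm (iSup₂_le fun V ⟨hV, hUV, hVU⟩ => ?_) ?_
  · exact le_iInf₂ fun F hF => le_symGroup_of_orbLE hV hUV hVU hF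
  · exact le_iSup₂ (f := fun V (_ : IsRegularSubgroup V ∧ U ≤ V ∧ orbLE V U) => V)
      (commonSymmetries U)
      ⟨isRegularSubgroup_commonSymmetries hU, le_commonSymmetries, orbLE_commonSymmetries hU⟩

end CommonSymmetries

theorem orbitExt_properties_general (h n : ℕ) (hn : 2 ≤ n)
    (U : Subgroup (Perm (Fin h) × Perm (Fin n)))
    (hU : IsRegularSubgroup U) :
    IsRegularSubgroup (orbitExt U) ∧
    (∀ F : (Fin h → Perm (Fin n)) → Perm (Fin n),
        USymmetric U F ↔ USymmetric (orbitExt U) F) ∧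
    (⨅ (F : (Fin h → Perm (Fin n)) → Perm (Fin n)) (_ : USymmetric U F),
        symGroup F) = orbitExt U := by
  have : Nontrivial (Fin n) := Fin.nontrivial_iff_two_le.mpr hn
  have hO := orbitExt_eq_commonSymmetries hU
  refine ⟨hO ▸ isRegularSubgroup_commonSymmetries hU, fun F => ?_, hO.symm⟩
  rw [usymmetric_iff_commonSymmetries_le, usymmetric_iff_le_symGroup, hO]

/-- For regular `U`: `O(U)` is regular, `F^U = F^{O(U)}`, and the intersection
of the symmetry groups of all `U`-symmetric SPFs equals `O(U)`. -/
theorem orbitExt_properties (h n : ℕ) (hh : 2 ≤ h) (hn : 2 ≤ n)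
    (U : Subgroup (Perm (Fin h) × Perm (Fin n)))
    (hU : IsRegularSubgroup U) :
    IsRegularSubgroup (orbitExt U) ∧
    (∀ F : (Fin h → Perm (Fin n)) → Perm (Fin n),
        USymmetric U F ↔ USymmetric (orbitExt U) F) ∧
    (⨅ (F : (Fin h → Perm (Fin n)) → Perm (Fin n)) (_ : USymmetric U F),
        symGroup F) = orbitExt U :=
  orbitExt_properties_general h n hn U hU
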